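/- arXiv:1202.5619 — 4 statements merged into one kernel-verified Lean document; each statement's English description precedes it below -/
import Mathlib

section
/- Let G be a graph where all vertices have weight 1. Then the minimum cost OPT_G over infinite walks equals the length of a shortest closed tour of G visiting every vertex exactly once (a TSP tour), provided G is metric. -/
/-!
A cyclic order `e` of the `n` vertices yields the periodic walk `k ↦ e (k mod n)`, in which every
vertex returns after exactly one round, of length equal to the tour length; hence `OPT ≤ TSP`.

Conversely, take a walk visiting every vertex infinitely often and a time `N` by which every vertex
has appeared. Let `v` be the vertex whose last visit `a ≤ N` is earliest, and `b` its next visit.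
Every vertex occurs in `W a, …, W b`, so shortcutting this closed segment to the first occurrences
of the vertices gives, by the triangle inequality, a tour no longer than the segment, which is at
most the latency of `v`.
-/

open scoped ENNReal BigOperators

/-- Total edge length of the segment of the infinite walk `W` from index `a` to `b`. -/
noncomputable def walkLen {V : Type*} (l : V → V → ℝ≥0∞) (W : ℕ → V) (a b : ℕ) : ℝ≥0∞ :=
  ∑ i ∈ Finset.Ico a b, l (W i) (W (i + 1))

/-- The walk visits every vertex infinitely often. -/
def VisitsInfOften {V : Type*} (W : ℕ → V) : Prop :=
  ∀ v : V, ∀ N : ℕ, ∃ a : ℕ, N ≤ a ∧ W a = v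

/-- Latency of vertex `v` on infinite walk `W`: the supremum, over visits to `v`,
of the length of the sub-walk until the next visit to `v`. -/
noncomputable def latency {V : Type*} (l : V → V → ℝ≥0∞) (W : ℕ → V) (v : V) : ℝ≥0∞ :=
  ⨆ (a : ℕ) (_ : W a = v), ⨅ (b : ℕ) (_ : a < b ∧ W b = v), walkLen l W a b

/-- Cost of an infinite walk: the maximum weighted latency over all vertices. -/
noncomputable def walkCost {V : Type*} (l : V → V → ℝ≥0∞) (φ : V → ℝ≥0∞) (W : ℕ → V) : ℝ≥0∞ :=
  ⨆ v : V, φ v * latency l W v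

/-- Optimal cost over all infinite walks (complete graph) visiting all vertices
infinitely often. -/
noncomputable def OPT {V : Type*} (l : V → V → ℝ≥0∞) (φ : V → ℝ≥0∞) : ℝ≥0∞ :=
  ⨅ (W : ℕ → V) (_ : VisitsInfOften W), walkCost l φ W

section Walks

variable {V : Type*} (l : V → V → ℝ≥0∞) (W : ℕ → V)

lemma walkLen_add {a b c : ℕ} (hab : a ≤ b) (hbc : b ≤ c) :
    walkLen l W a b + walkLen l W b c = walkLen l W a c :=
  Finset.sum_Ico_consecutive _ hab hbc

lemma walkLen_mono_right {a b c : ℕ} (hbc : b ≤ c) : walkLen l W a b ≤ walkLen l W a c :=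
  Finset.sum_le_sum_of_subset (Finset.Ico_subset_Ico le_rfl hbc)

lemma walkLen_le_latency {a b : ℕ} (ha : W a = W b)
    (hnext : ∀ c, a < c → W c = W b → b ≤ c) : walkLen l W a b ≤ latency l W (W b) :=
  le_iSup₂_of_le a ha <| le_iInf₂ fun _ hc => walkLen_mono_right l W (hnext _ hc.1 hc.2)

lemma latency_le_of_forall_return {v : V} {L : ℝ≥0∞}
    (hreturn : ∀ a, W a = v → ∃ b, a < b ∧ W b = v ∧ walkLen l W a b ≤ L) :
    latency l W v ≤ L :=
  iSup₂_le fun a ha =>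
    let ⟨b, hab, hb, hL⟩ := hreturn a ha
    iInf₂_le_of_le b ⟨hab, hb⟩ hL

end Walks

section Metric

variable {V : Type*} [PseudoEMetricSpace V] (W : ℕ → V)

lemma edist_le_walkLen {s t : ℕ} (hst : s ≤ t) :
    edist (W s) (W t) ≤ walkLen (fun x y => edist x y) W s t := by
  induction t, hst using Nat.le_induction with
  | base => simp
  | succ t hst ih =>
    calc edist (W s) (W (t + 1)) ≤ edist (W s) (W t) + edist (W t) (W (t + 1)) :=
          edist_triangle _ _ _
      _ ≤ walkLen (fun x y => edist x y) W s t + edist (W t) (W (t + 1)) := by gcongr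
      _ = walkLen (fun x y => edist x y) W s (t + 1) := Finset.sum_Ico_succ_top hst _ |>.symm

lemma sum_edist_le_walkLen {T : ℕ → ℕ} (hT : Monotone T) (n : ℕ) :
    ∑ k ∈ Finset.range n, edist (W (T k)) (W (T (k + 1))) ≤
      walkLen (fun x y => edist x y) W (T 0) (T n) := by
  induction n with
  | zero => simp [walkLen]
  | succ n ih =>
    rw [Finset.sum_range_succ, ← walkLen_add _ W (hT n.zero_le) (hT n.le_succ)]
    exact add_le_add ih (edist_le_walkLen W (hT n.le_succ))

end Metric

section Tours

open Fin.NatCast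

variable {V : Type*} (l : V → V → ℝ≥0∞)

noncomputable def tourLength {n : ℕ} (e : Fin n → V) : ℝ≥0∞ :=
  ∑ i, l (e i) (e (finRotate n i))

lemma walkLen_natCast_eq_tourLength {n : ℕ} [NeZero n] (e : Fin n → V) (a : ℕ) :
    walkLen l (fun k : ℕ => e k) a (a + n) = tourLength l e := by
  rw [walkLen, Finset.sum_Ico_eq_sum_range, Nat.add_sub_cancel_left,
    ← Fin.sum_univ_eq_sum_range (fun k => l (e ↑(a + k)) (e ↑(a + k + 1)))]
  refine Fintype.sum_equiv (Equiv.addLeft (a : Fin n)) _ _ fun i => ?_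
  simp [finRotate_apply, add_assoc]

lemma OPT_le_tourLength {n : ℕ} [NeZero n] (e : Fin n → V) (he : Function.Surjective e) :
    OPT l (fun _ => 1) ≤ tourLength l e := by
  have hvisits : VisitsInfOften fun k : ℕ => e k := by
    intro v N
    obtain ⟨i, rfl⟩ := he v
    refine ⟨i + n * N, ?_, by simp [Nat.cast_add, Fin.natCast_eq_zero.mpr (dvd_mul_right n N)]⟩
    nlinarith [NeZero.one_le (n := n)]
  refine iInf₂_le_of_le _ hvisits <| iSup_le fun v => ?_
  rw [one_mul]
  refine latency_le_of_forall_return l _ fun a ha =>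
    ⟨a + n, by simp [NeZero.pos n], by simp [← ha], ?_⟩
  exact (walkLen_natCast_eq_tourLength l e a).le

lemma tourLength_le_walkLen_of_monotone [PseudoEMetricSpace V] {n : ℕ} [NeZero n]
    (e : Fin n → V) (W : ℕ → V) {T : ℕ → ℕ} (hT : Monotone T) (hWT : ∀ k ≤ n, W (T k) = e k) :
    tourLength (fun x y => edist x y) e ≤ walkLen (fun x y => edist x y) W (T 0) (T n) :=
  calc tourLength (fun x y => edist x y) e
      = walkLen (fun x y => edist x y) (fun k : ℕ => e k) 0 n := by
        rw [← walkLen_natCast_eq_tourLength, zero_add]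
    _ = ∑ k ∈ Finset.range n, edist (W (T k)) (W (T (k + 1))) :=
        Finset.sum_congr (by rw [Finset.range_eq_Ico]) fun k hk => by
          rw [Finset.mem_range] at hk
          rw [hWT k hk.le, hWT (k + 1) hk]
    _ ≤ walkLen (fun x y => edist x y) W (T 0) (T n) := sum_edist_le_walkLen W hT n

end Tours

section Shortcut

open Fin.NatCast

variable {V : Type*} (W : ℕ → V)

lemma exists_covering_return [Finite V] (hW : VisitsInfOften W) :
    ∃ a b, W a = W b ∧ (∀ c, a < c → W c = W b → b ≤ c) ∧
      ∀ u, ∃ i, a ≤ i ∧ i ≤ b ∧ W i = u := by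
  classical
  have : Nonempty V := ⟨W 0⟩
  obtain ⟨N, hN⟩ : ∃ N, ∀ u, ∃ i ≤ N, W i = u := by
    choose c hc using fun u => hW u 0
    obtain ⟨N, hN⟩ := (Set.finite_range c).bddAbove
    exact ⟨N, fun u => ⟨c u, hN ⟨u, rfl⟩, (hc u).2⟩⟩
  let last : V → ℕ := fun u => Nat.findGreatest (W · = u) N
  have hlast : ∀ u, W (last u) = u := fun u =>
    let ⟨_, hi, hu⟩ := hN u
    Nat.findGreatest_spec (P := fun i => W i = u) hi hu
  obtain ⟨v, hv⟩ := Finite.exists_min last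
  have hnext := hW v (last v + 1)
  have hb := Nat.find_spec hnext
  refine ⟨last v, Nat.find hnext, by rw [hlast, hb.2], fun c hc hWc => ?_, fun u => ?_⟩
  · exact Nat.find_min' hnext ⟨hc, hWc.trans hb.2⟩
  have hNb : N < Nat.find hnext := by
    by_contra! h
    have : Nat.find hnext ≤ last v := Nat.le_findGreatest h hb.2
    omega
  exact ⟨last u, hv u, (Nat.findGreatest_le N).trans hNb.le, hlast u⟩

lemma exists_tourLength_le_walkLen [PseudoEMetricSpace V] [Fintype V] {a b : ℕ}
    (hWab : W a = W b) (hcover : ∀ u, ∃ i, a ≤ i ∧ i ≤ b ∧ W i = u) :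
    ∃ e : Fin (Fintype.card V) ≃ V,
      tourLength (fun x y => edist x y) e ≤ walkLen (fun x y => edist x y) W a b := by
  classical
  have : Nonempty V := ⟨W a⟩
  set n := Fintype.card V
  let first : V → ℕ := fun u => Nat.find (hcover u)
  have hfirst : ∀ u, a ≤ first u ∧ first u ≤ b ∧ W (first u) = u := fun u =>
    Nat.find_spec (hcover u)
  have hfirst_le : ∀ i, a ≤ i → i ≤ b → first (W i) ≤ i := fun i hai hib =>
    Nat.find_min' (hcover (W i)) ⟨hai, hib, rfl⟩
  -- The shortcut tour lists the vertices in the order of their first occurrence in `[a, b]`.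
  let _ : LinearOrder V := LinearOrder.lift' first fun u v h => by
    rw [← (hfirst u).2.2, h, (hfirst v).2.2]
  let e := Fintype.orderIsoFinOfCardEq V (rfl : Fintype.card V = n)
  refine ⟨e.toEquiv, ?_⟩
  let T : ℕ → ℕ := fun k => if k < n then first (e k) else b
  have hT0 : T 0 = a := by
    have hmin : first (e 0) ≤ first (W a) := by
      have h := e.monotone (Fin.zero_le (e.symm (W a)))
      rwa [e.apply_symm_apply] at h
    have hWa : first (W a) ≤ a := hfirst_le a le_rfl ((hfirst (W a)).1.trans (hfirst _).2.1)
    simp only [T, if_pos (NeZero.pos n)]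
    exact le_antisymm (hmin.trans hWa) (hfirst (e 0)).1
  have hTn : T n = b := if_neg (lt_irrefl n)
  have hT : Monotone T := by
    refine monotone_nat_of_le_succ fun k => ?_
    rcases lt_or_ge (k + 1) n with hk | hk
    · have hcast : (k : Fin n) ≤ ((k + 1 : ℕ) : Fin n) := by
        rw [Fin.le_iff_val_le_val, Fin.val_natCast, Fin.val_natCast, Nat.mod_eq_of_lt hk,
          Nat.mod_eq_of_lt (by omega)]
        omega
      simp only [T, if_pos hk, if_pos (by omega : k < n)]
      exact e.monotone hcast
    · simp only [T, if_neg (by omega : ¬k + 1 < n)]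
      split_ifs
      exacts [(hfirst _).2.1, le_rfl]
  have hWT : ∀ k ≤ n, W (T k) = e k := by
    intro k hk
    rcases hk.lt_or_eq with hk | rfl
    · simp only [T, if_pos hk, (hfirst _).2.2]
    · rw [hTn, ← hWab, ← hT0, Fin.natCast_self]
      simp only [T, if_pos (NeZero.pos n), (hfirst _).2.2, Nat.cast_zero]
  have h := tourLength_le_walkLen_of_monotone e W hT hWT
  rwa [hT0, hTn] at h

lemma iInf_tourLength_le_walkCost [PseudoEMetricSpace V] [Fintype V] (hW : VisitsInfOften W) :
    ⨅ e : Fin (Fintype.card V) ≃ V, tourLength (fun x y => edist x y) e ≤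
      walkCost (fun x y => edist x y) (fun _ => 1) W := by
  obtain ⟨a, b, hWab, hnext, hcover⟩ := exists_covering_return W hW
  obtain ⟨e, he⟩ := exists_tourLength_le_walkLen W hWab hcover
  calc _ ≤ tourLength (fun x y => edist x y) e := iInf_le _ e
    _ ≤ walkLen (fun x y => edist x y) W a b := he
    _ ≤ latency (fun x y => edist x y) W (W b) := walkLen_le_latency _ W hWab hnext
    _ ≤ walkCost (fun x y => edist x y) (fun _ => 1) W := le_iSup_of_le (W b) (one_mul _).ge

end Shortcut

/-- In a metric graph in which all vertex weights equal 1, the optimal min-max latency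
cost equals the length of a shortest TSP tour. -/
theorem OPT_eq_TSP_of_unit_weights {V : Type*} [MetricSpace V] [Fintype V] [Nonempty V] :
    OPT (fun a b => edist a b) (fun _ : V => (1 : ℝ≥0∞)) =
      ⨅ e : Fin (Fintype.card V) ≃ V,
        ∑ i : Fin (Fintype.card V), edist (e i) (e (finRotate _ i)) :=
  le_antisymm (le_iInf fun e => OPT_le_tourLength _ e e.surjective)
    (le_iInf₂ fun W hW => iInf_tourLength_le_walkCost W hW)
end

section
/- Let G' be a weight-relaxed graph (all weights are powers of 1/2) and let S = [S_1, ..., S_t] be a binary walk with binary decomposition (S_1, ..., S_t). If a and b are the indices of two consecutive visits to a vertex v of weight 1/2^i in the infinite expansion Δ(S), then the sub-walk Δ(S)(a,b) intersects at most 2^{i+1} members of (S_1, ..., S_t). -/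
open scoped ENNReal BigOperators

/-!
The block of length `2 ^ i` following the one that contains `β a` holds a visit to `v`. That
visit comes after `a`, hence not before the next visit `b`, so `β b` lies less than two blocks
past the start of the block of `β a`.
-/

lemma le_of_forall_between_not {P : ℕ → Prop} {a b c : ℕ}
    (hbetween : ∀ d, a < d → d < b → ¬ P d) (hac : a < c) (hc : P c) : b ≤ c :=
  not_lt.mp fun hcb => hbetween c hac hcb hc

lemma sub_le_two_mul_of_visit_in_every_block {V : Type*} {W : ℕ → V} {β : ℕ → ℕ}
    (hmono : Monotone β) {n : ℕ} (hn : 0 < n) {v : V}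
    (hvisit : ∀ j : ℕ, ∃ c, W c = v ∧ j * n ≤ β c ∧ β c < (j + 1) * n)
    {a b : ℕ} (hbetween : ∀ c, a < c → c < b → W c ≠ v) :
    β b + 1 - β a ≤ 2 * n := by
  set j := β a / n
  have hj_le : j * n ≤ β a := Nat.div_mul_le_self _ _
  have hlt_succ : β a < (j + 1) * n := by
    rw [mul_comm]; exact Nat.lt_mul_div_succ _ hn
  obtain ⟨c, hc, hc_lo, hc_hi⟩ := hvisit (j + 1)
  have hac : a < c := hmono.reflect_lt (hlt_succ.trans_le hc_lo)
  have hbc : β b ≤ β c := hmono (le_of_forall_between_not hbetween hac hc)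
  have : (j + 1 + 1) * n = j * n + 2 * n := by ring
  omega

theorem binary_walk_block_bound_general {V : Type*} (φ : V → ℝ≥0∞)
    (W : ℕ → V) (β : ℕ → ℕ) (t : ℕ)
    (hmono : Monotone β)
    (hbin : ∀ (u : V) (x : ℕ), φ u = (1/2 : ℝ≥0∞) ^ x →
      2 ^ x ≤ t ∧ ∀ j : ℕ, ∃! a : ℕ, W a = u ∧ j * 2 ^ x ≤ β a ∧ β a < (j + 1) * 2 ^ x)
    (v : V) (i : ℕ) (hv : φ v = (1/2 : ℝ≥0∞) ^ i)
    (a b : ℕ)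
    (hcons : ∀ c, a < c → c < b → W c ≠ v) :
    β b + 1 - β a ≤ 2 ^ (i + 1) := by
  obtain ⟨-, hblock⟩ := hbin v i hv
  rw [pow_succ']
  exact sub_le_two_mul_of_visit_in_every_block hmono (by positivity)
    (fun j => (hblock j).exists) hcons

/-- In the infinite expansion of a binary walk (encoded via a block-assignment function β
with period t), any sub-walk between two consecutive visits to a vertex of weight 1/2^i
intersects at most 2^(i+1) members of the binary decomposition. -/
theorem binary_walk_block_bound {V : Type*} (φ : V → ℝ≥0∞)
    (hpow : ∀ u : V, ∃ x : ℕ, φ u = (1/2 : ℝ≥0∞) ^ x)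
    (W : ℕ → V) (β : ℕ → ℕ) (t p : ℕ) (ht : 0 < t) (hp : 0 < p)
    (hβ0 : β 0 = 0) (hmono : Monotone β) (hstep : ∀ i, β (i + 1) ≤ β i + 1)
    (hper : ∀ i, W (i + p) = W i ∧ β (i + p) = β i + t)
    (hbin : ∀ (u : V) (x : ℕ), φ u = (1/2 : ℝ≥0∞) ^ x →
      2 ^ x ≤ t ∧ ∀ j : ℕ, ∃! a : ℕ, W a = u ∧ j * 2 ^ x ≤ β a ∧ β a < (j + 1) * 2 ^ x)
    (v : V) (i : ℕ) (hv : φ v = (1/2 : ℝ≥0∞) ^ i)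
    (a b : ℕ) (hab : a < b) (ha : W a = v) (hb : W b = v)
    (hcons : ∀ c, a < c → c < b → W c ≠ v) :
    β b + 1 - β a ≤ 2 ^ (i + 1) :=
  binary_walk_block_bound_general φ W β t hmono hbin v i hv a b hcons
end

section
/- For every k ≥ 1 and n divisible by 4, there exists a metric graph G on n vertices such that any closed walk whose infinite expansion has cost at most k·OPT_G must have size at least n²/(4k); hence any algorithm with guaranteed output size O(n²/k) has approximation factor Ω(k). -/
open scoped ENNReal BigOperators

/-!
Take `2m` heavy vertices of weight `1` and `2m` light vertices of weight `L = 2mk + 1`, at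
distance `w u + w v` from each other; up to scaling this is the paper's graph, the heavy–heavy
distance `2` playing the role of `ε`. A tour through all heavy vertices followed by one light
vertex, the lights taken in turn, has cost `2 (2m + L)`. In such a star metric a closed walk pays
`2 w u` for every vertex `u` it touches, so under cost `k · OPT < 2L (k + 1)` every heavy vertex
returns before meeting `k + 1` light ones. All `2m` light vertices occur in each period, so each
heavy vertex occurs in it at least `2m / k` times, and the period is at least
`(2m)² / k = n² / (4k)`.
-/

open Finset Function

section StarMetric

variable {V : Type*} [DecidableEq V] (w : V → ℝ≥0∞)

def starDist (u v : V) : ℝ≥0∞ := if u = v then 0 else w u + w v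

variable {w}

@[simp] lemma starDist_self (v : V) : starDist w v v = 0 := if_pos rfl

lemma starDist_of_ne {u v : V} (h : u ≠ v) : starDist w u v = w u + w v := if_neg h

lemma le_starDist {u v : V} (h : u ≠ v) : w u + w v ≤ starDist w u v := (starDist_of_ne h).ge

lemma starDist_comm (u v : V) : starDist w u v = starDist w v u := by
  unfold starDist
  rcases eq_or_ne u v with rfl | h
  · rfl
  · rw [if_neg h, if_neg h.symm, add_comm]

lemma starDist_le (u v : V) : starDist w u v ≤ w u + w v := by
  unfold starDist; split_ifs <;> simp

lemma starDist_triangle (u v x : V) : starDist w u x ≤ starDist w u v + starDist w v x := by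
  rcases eq_or_ne u v with rfl | huv
  · simp
  rcases eq_or_ne v x with rfl | hvx
  · simp
  calc starDist w u x ≤ w u + w x := starDist_le u x
    _ ≤ (w u + w v) + (w v + w x) := by gcongr <;> simp
    _ = starDist w u v + starDist w v x := by rw [starDist_of_ne huv, starDist_of_ne hvx]

lemma starDist_pos {u v : V} (h : u ≠ v) (hu : 0 < w u) : 0 < starDist w u v := by
  rw [starDist_of_ne h]; exact hu.trans_le le_self_add

lemma starDist_ne_top {u v : V} (hu : w u ≠ ⊤) (hv : w v ≠ ⊤) : starDist w u v ≠ ⊤ :=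
  ne_top_of_le_ne_top (ENNReal.add_ne_top.2 ⟨hu, hv⟩) (starDist_le u v)

end StarMetric

section Walks

variable {V : Type*} {l : V → V → ℝ≥0∞} {w : V → ℝ≥0∞} {W : ℕ → V}

lemma walkLen_le_sum_add_sum (hl : ∀ x y, l x y ≤ w x + w y) (a b : ℕ) :
    walkLen l W a b ≤ ∑ i ∈ Ico a b, w (W i) + ∑ i ∈ Ico a b, w (W (i + 1)) := by
  rw [walkLen, ← sum_add_distrib]
  exact sum_le_sum fun i _ => hl _ _

/-- A walk pays `w u` on entering and on leaving each vertex `u` it visits,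
except at its two ends. -/
lemma two_mul_sum_image_le_walkLen [DecidableEq V] (hl : ∀ x y, x ≠ y → w x + w y ≤ l x y)
    {a b : ℕ} (hab : a ≤ b) :
    2 * ∑ u ∈ (Icc a b).image W, w u ≤ walkLen l W a b + w (W a) + w (W b) := by
  induction b, hab using Nat.le_induction with
  | base => simp [walkLen, two_mul]
  | succ b hab ih =>
    have hstep : walkLen l W a (b + 1) = walkLen l W a b + l (W b) (W (b + 1)) :=
      sum_Ico_succ_top hab _
    have himage : (Icc a (b + 1)).image W = insert (W (b + 1)) ((Icc a b).image W) := by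
      rw [← image_insert, show Icc a (b + 1) = insert (b + 1) (Icc a b) by ext; simp; omega]
    rw [hstep, himage]
    by_cases hmem : W (b + 1) ∈ (Icc a b).image W
    · have hleave : w (W b) ≤ l (W b) (W (b + 1)) + w (W (b + 1)) := by
        rcases eq_or_ne (W b) (W (b + 1)) with h | h
        · rw [← h]; exact le_add_self
        · exact le_self_add.trans ((hl _ _ h).trans le_self_add)
      calc 2 * ∑ u ∈ insert (W (b + 1)) ((Icc a b).image W), w u
          = 2 * ∑ u ∈ (Icc a b).image W, w u := by rw [insert_eq_of_mem hmem]
        _ ≤ walkLen l W a b + w (W a) + w (W b) := ih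
        _ ≤ walkLen l W a b + w (W a) + (l (W b) (W (b + 1)) + w (W (b + 1))) := by gcongr
        _ = _ := by ring
    · have hne : W b ≠ W (b + 1) := fun h =>
        hmem (h ▸ mem_image_of_mem W (mem_Icc.2 ⟨hab, le_rfl⟩))
      calc 2 * ∑ u ∈ insert (W (b + 1)) ((Icc a b).image W), w u
          = 2 * ∑ u ∈ (Icc a b).image W, w u + 2 * w (W (b + 1)) := by
            rw [sum_insert hmem]; ring
        _ ≤ walkLen l W a b + w (W a) + w (W b) + 2 * w (W (b + 1)) := by gcongr
        _ = walkLen l W a b + (w (W b) + w (W (b + 1))) + w (W a) + w (W (b + 1)) := by ring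
        _ ≤ _ := by gcongr; exact hl _ _ hne

end Walks

section Latency

variable {V : Type*} {l : V → V → ℝ≥0∞} {W : ℕ → V} {v : V} {X : ℝ≥0∞}

lemma latency_le_of_forall_exists
    (h : ∀ a, W a = v → ∃ b, a < b ∧ W b = v ∧ walkLen l W a b ≤ X) : latency l W v ≤ X :=
  iSup₂_le fun a ha =>
    let ⟨b, hab, hb, hlen⟩ := h a ha
    (iInf₂_le b ⟨hab, hb⟩).trans hlen

lemma exists_walkLen_lt_of_latency_lt (h : latency l W v < X) {a : ℕ} (ha : W a = v) :
    ∃ b, a < b ∧ W b = v ∧ walkLen l W a b < X := by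
  have hnext : ⨅ (b : ℕ) (_ : a < b ∧ W b = v), walkLen l W a b < X :=
    (le_iSup₂ (f := fun a (_ : W a = v) => ⨅ (b : ℕ) (_ : a < b ∧ W b = v), walkLen l W a b)
      a ha).trans_lt h
  simp only [iInf_lt_iff] at hnext
  obtain ⟨b, ⟨hab, hb⟩, hlen⟩ := hnext
  exact ⟨b, hab, hb, hlen⟩

lemma mul_latency_le_walkCost (φ : V → ℝ≥0∞) (v : V) : φ v * latency l W v ≤ walkCost l φ W :=
  le_iSup (fun v => φ v * latency l W v) v

lemma OPT_le_walkCost (φ : V → ℝ≥0∞) (hW : VisitsInfOften W) : OPT l φ ≤ walkCost l φ W :=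
  iInf₂_le W hW

end Latency

section Periodic

lemma Function.Periodic.sum_Ico_eq_sum_range {M : Type*} [AddCommMonoid M] {g : ℕ → M} {q : ℕ}
    (hg : Periodic g q) (a : ℕ) : ∑ i ∈ Ico a (a + q), g i = ∑ i ∈ range q, g i := by
  calc ∑ i ∈ Ico a (a + q), g i = ∑ i ∈ Ico a (a + q), g (i % q) :=
        sum_congr rfl fun i _ => (hg.map_mod_nat i).symm
    _ = ∑ i ∈ range q, g i := by rw [← Nat.image_Ico_mod a q, sum_image (Nat.mod_injOn_Ico a q)]

lemma Function.Periodic.sum_Ico_add_mul {M : Type*} [AddCommMonoid M] {g : ℕ → M} {q : ℕ}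
    (hg : Periodic g q) (a c : ℕ) : ∑ i ∈ Ico a (a + c * q), g i = c • ∑ i ∈ range q, g i := by
  induction c with
  | zero => simp
  | succ c ih =>
    rw [← sum_Ico_consecutive _ (Nat.le_add_right a (c * q)) (by nlinarith), ih,
      show a + (c + 1) * q = a + c * q + q by ring, hg.sum_Ico_eq_sum_range, succ_nsmul]

variable {V : Type*} {W : ℕ → V} {p : ℕ}

lemma Function.Periodic.exists_mem_Ico_nat (hW : Periodic W p) (hp : 0 < p) (i a : ℕ) :
    ∃ j ∈ Ico a (a + p), W j = W i := by
  refine ⟨a + (i + a * p - a) % p, mem_Ico.2 ⟨le_self_add, by simpa using Nat.mod_lt _ hp⟩, ?_⟩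
  have hle : a ≤ i + a * p := le_add_left (Nat.le_mul_of_pos_right a hp)
  calc W (a + (i + a * p - a) % p) = W (a + (i + a * p - a) % p + (i + a * p - a) / p * p) :=
        (hW.nat_mul _ _).symm
    _ = W (i + a * p) := by congr 1; have := Nat.mod_add_div' (i + a * p - a) p; omega
    _ = W i := hW.nat_mul a i

lemma Function.Periodic.visitsInfOften (hW : Periodic W p) (hp : 0 < p)
    (hsurj : Surjective W) : VisitsInfOften W := fun v N =>
  let ⟨i, hi⟩ := hsurj v
  let ⟨j, hj, hWj⟩ := hW.exists_mem_Ico_nat hp i N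
  ⟨j, (mem_Ico.1 hj).1, hWj.trans hi⟩

lemma sum_count_fiber_eq [Fintype V] [DecidableEq V] (W : ℕ → V) (p : ℕ) :
    ∑ v, Nat.count (fun i => W i = v) p = p := by
  simp only [Nat.count_eq_card_filter_range]
  rw [← card_eq_sum_card_fiberwise (fun i _ => mem_univ (W i)), card_range]

/-- Pigeonhole over one period: the visits to `v` in a window of length `p` cut it into
segments, and each segment meets at most `k` vertices of `L`. -/
lemma card_le_mul_count_of_periodic [DecidableEq V] (hW : Periodic W p) (hp : 0 < p)
    {v : V} (hv : ∃ a, W a = v) {L : Finset V} (hL : ∀ u ∈ L, ∃ i, W i = u) {k : ℕ}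
    (hret : ∀ a, W a = v → ∃ b, a < b ∧ W b = v ∧ #((Icc a b).image W ∩ L) ≤ k) :
    #L ≤ k * Nat.count (fun i => W i = v) p := by
  obtain ⟨a₀, ha₀⟩ := hv
  have hper : Periodic (fun i => W i = v) p := fun i => by simp only [hW i]
  rw [← Nat.filter_Ico_card_eq_of_periodic a₀ p _ hper]
  have hwindow : ∀ u ∈ L, ∃ j ∈ Ico a₀ (a₀ + p), W j = u := fun u hu => by
    obtain ⟨i, rfl⟩ := hL u hu
    exact hW.exists_mem_Ico_nat hp i a₀
  choose visit hvisit hWvisit using hwindow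
  let prev : ℕ → ℕ := Nat.findGreatest (fun t => W t = v)
  have hprev : ∀ i ∈ Ico a₀ (a₀ + p), a₀ ≤ prev i ∧ prev i ≤ i ∧ W (prev i) = v := fun i hi =>
    ⟨Nat.le_findGreatest (mem_Ico.1 hi).1 ha₀, Nat.findGreatest_le i,
      Nat.findGreatest_spec (P := fun t => W t = v) (mem_Ico.1 hi).1 ha₀⟩
  let f : V → ℕ := fun u => if hu : u ∈ L then prev (visit u hu) else 0
  refine card_le_mul_card_image_of_maps_to (f := f) (fun u hu => ?_) k fun t ht => ?_
  · obtain ⟨h₁, h₂, h₃⟩ := hprev _ (hvisit u hu)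
    simp only [f, dif_pos hu, mem_filter, mem_Ico]
    exact ⟨⟨h₁, h₂.trans_lt (mem_Ico.1 (hvisit u hu)).2⟩, h₃⟩
  · obtain ⟨b, htb, hWb, hb⟩ := hret t (mem_filter.1 ht).2
    refine (card_le_card fun u hu => ?_).trans hb
    obtain ⟨huL, hfu⟩ := mem_filter.1 hu
    simp only [f, dif_pos huL] at hfu
    have hle : visit u huL ≤ b := by
      by_contra! hlt
      exact Nat.findGreatest_is_greatest (hfu ▸ htb) hlt.le hWb
    refine mem_inter.2 ⟨mem_image.2 ⟨visit u huL, mem_Icc.2 ⟨?_, hle⟩, hWvisit u huL⟩, huL⟩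
    exact hfu ▸ (hprev _ (hvisit u huL)).2.1

end Periodic

namespace HeavyLight

variable (m k : ℕ)

def heavyVertices : Finset (Fin (4 * m)) := {v | v.val < 2 * m}

def lightVertices : Finset (Fin (4 * m)) := {v | ¬ v.val < 2 * m}

def weight (v : Fin (4 * m)) : ℝ≥0∞ :=
  if v.val < 2 * m then 1 else ((2 * m * k + 1 : ℕ) : ℝ≥0∞)

noncomputable def importance (v : Fin (4 * m)) : ℝ≥0∞ :=
  if v.val < 2 * m then 1 else ((2 * m : ℕ) : ℝ≥0∞)⁻¹

def tour (hm : 0 < m) (i : ℕ) : Fin (4 * m) :=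
  if h : i % (2 * m + 1) < 2 * m then ⟨i % (2 * m + 1), by omega⟩
  else ⟨2 * m + i / (2 * m + 1) % (2 * m), by
    have := Nat.mod_lt (i / (2 * m + 1)) (by omega : 0 < 2 * m)
    omega⟩

variable {m k}

lemma weight_pos (v : Fin (4 * m)) : 0 < weight m k v := by
  unfold weight; split_ifs <;> simp

lemma weight_ne_top (v : Fin (4 * m)) : weight m k v ≠ ⊤ := by
  unfold weight
  split_ifs
  · exact ENNReal.one_ne_top
  · exact ENNReal.natCast_ne_top _

lemma importance_pos (v : Fin (4 * m)) : 0 < importance m v := by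
  unfold importance
  split_ifs
  · exact zero_lt_one
  · exact ENNReal.inv_pos.2 (ENNReal.natCast_ne_top _)

lemma importance_le_one (v : Fin (4 * m)) : importance m v ≤ 1 := by
  unfold importance
  split_ifs
  · exact le_rfl
  · exact ENNReal.inv_le_one.2 (by exact_mod_cast (by omega : 1 ≤ 2 * m))

lemma card_heavyVertices : #(heavyVertices m) = 2 * m := by
  rw [heavyVertices, Fin.card_filter_val_lt, min_eq_right (by omega)]

lemma card_lightVertices : #(lightVertices m) = 2 * m := by
  have h := card_filter_add_card_filter_not (s := (univ : Finset (Fin (4 * m))))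
    (fun v => v.val < 2 * m)
  rw [← heavyVertices, card_heavyVertices, card_univ, Fintype.card_fin] at h
  rw [lightVertices]
  omega

section Tour

variable (hm : 0 < m)

lemma tour_val_lt_iff (i : ℕ) : (tour m hm i).val < 2 * m ↔ i % (2 * m + 1) < 2 * m := by
  unfold tour; split_ifs with h <;> simp [h]

lemma weight_tour (i : ℕ) :
    weight m k (tour m hm i) =
      if i % (2 * m + 1) < 2 * m then 1 else ((2 * m * k + 1 : ℕ) : ℝ≥0∞) := by
  simp only [weight, tour_val_lt_iff]

lemma sum_Ico_weight_tour (a c : ℕ) :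
    ∑ i ∈ Ico a (a + c * (2 * m + 1)), weight m k (tour m hm i) =
      c * (2 * m + (2 * m * k + 1)) := by
  have hper : Periodic (fun i => weight m k (tour m hm i)) (2 * m + 1) := fun i => by
    simp only [weight_tour, Nat.add_mod_right]
  have hheavy : ∀ i ∈ range (2 * m), weight m k (tour m hm i) = 1 := fun i hi => by
    rw [mem_range] at hi
    rw [weight_tour, if_pos (by rwa [Nat.mod_eq_of_lt (by omega)])]
  have hround :
      ∑ i ∈ range (2 * m + 1), weight m k (tour m hm i) = 2 * m + (2 * m * k + 1) := by
    rw [sum_range_succ, sum_congr rfl hheavy, weight_tour,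
      if_neg (by rw [Nat.mod_eq_of_lt (by omega)]; omega)]
    simp
  rw [hper.sum_Ico_add_mul, hround, nsmul_eq_mul]

lemma walkLen_tour_le (a c : ℕ) :
    walkLen (starDist (weight m k)) (tour m hm) a (a + c * (2 * m + 1)) ≤
      2 * c * (2 * m + (2 * m * k + 1)) := by
  refine (walkLen_le_sum_add_sum starDist_le a _).trans_eq ?_
  rw [sum_Ico_add' (fun i => weight m k (tour m hm i)), add_right_comm,
    sum_Ico_weight_tour, sum_Ico_weight_tour]
  ring

lemma tour_add_of_heavy {a : ℕ} (h : a % (2 * m + 1) < 2 * m) :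
    tour m hm (a + (2 * m + 1)) = tour m hm a := by
  simp only [tour, Nat.add_mod_right, dif_pos h]

lemma tour_periodic : Periodic (tour m hm) (2 * m * (2 * m + 1)) := fun i => by
  have hdiv : (i + 2 * m * (2 * m + 1)) / (2 * m + 1) = i / (2 * m + 1) + 2 * m :=
    Nat.add_mul_div_right _ _ (by omega)
  simp only [tour, Nat.add_mul_mod_self_right, hdiv, Nat.add_mod_right]

lemma tour_surjective : Surjective (tour m hm) := fun v => by
  by_cases hv : v.val < 2 * m
  · refine ⟨v.val, Fin.ext ?_⟩
    simp [tour, Nat.mod_eq_of_lt (by omega : v.val < 2 * m + 1), hv]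
  · refine ⟨2 * m + (v.val - 2 * m) * (2 * m + 1), Fin.ext ?_⟩
    have hmod : (2 * m + (v.val - 2 * m) * (2 * m + 1)) % (2 * m + 1) = 2 * m := by
      rw [Nat.add_mul_mod_self_right, Nat.mod_eq_of_lt (by omega)]
    have hdiv : (2 * m + (v.val - 2 * m) * (2 * m + 1)) / (2 * m + 1) = v.val - 2 * m := by
      rw [Nat.add_mul_div_right _ _ (by omega), Nat.div_eq_of_lt (by omega), zero_add]
    simp only [tour, hmod, lt_irrefl, dite_false, hdiv,
      Nat.mod_eq_of_lt (by omega : v.val - 2 * m < 2 * m)]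
    omega

lemma walkCost_tour_le :
    walkCost (starDist (weight m k)) (importance m) (tour m hm) ≤
      2 * (2 * m + (2 * m * k + 1)) := by
  refine iSup_le fun v => ?_
  by_cases hv : v.val < 2 * m
  · rw [importance, if_pos hv, one_mul]
    refine latency_le_of_forall_exists fun a ha => ⟨a + 1 * (2 * m + 1), by omega, ?_, ?_⟩
    · rw [one_mul, tour_add_of_heavy hm (by rwa [← tour_val_lt_iff hm, ha]), ha]
    · simpa using walkLen_tour_le hm a 1
  · rw [importance, if_neg hv]
    have hlat : latency (starDist (weight m k)) (tour m hm) v ≤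
        2 * (2 * m : ℕ) * (2 * m + (2 * m * k + 1)) := by
      refine latency_le_of_forall_exists fun a ha => ⟨a + 2 * m * (2 * m + 1), ?_, ?_, ?_⟩
      · have : 0 < 2 * m * (2 * m + 1) := by positivity
        omega
      · rw [tour_periodic hm, ha]
      · simpa using walkLen_tour_le hm a (2 * m)
    have h2m : ((2 * m : ℕ) : ℝ≥0∞) ≠ 0 := by exact_mod_cast (by omega : 2 * m ≠ 0)
    calc ((2 * m : ℕ) : ℝ≥0∞)⁻¹ * latency (starDist (weight m k)) (tour m hm) v
        ≤ ((2 * m : ℕ) : ℝ≥0∞)⁻¹ * (2 * (2 * m : ℕ) * (2 * m + (2 * m * k + 1))) := by gcongr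
      _ = ((2 * m : ℕ) : ℝ≥0∞)⁻¹ * (2 * m : ℕ) * (2 * (2 * m + (2 * m * k + 1))) := by ring
      _ = 2 * (2 * m + (2 * m * k + 1)) := by
        rw [ENNReal.inv_mul_cancel h2m (ENNReal.natCast_ne_top _), one_mul]

end Tour

lemma OPT_le (hm : 0 < m) :
    OPT (starDist (weight m k)) (importance m) ≤ 2 * (2 * m + (2 * m * k + 1)) :=
  (OPT_le_walkCost _ ((tour_periodic hm).visitsInfOften (by positivity) (tour_surjective hm))).trans
    (walkCost_tour_le hm)

lemma latency_lt_of_walkCost_le (hm : 0 < m) {W : ℕ → Fin (4 * m)}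
    (hcost : walkCost (starDist (weight m k)) (importance m) W ≤
      k * OPT (starDist (weight m k)) (importance m))
    {v : Fin (4 * m)} (hv : v.val < 2 * m) :
    latency (starDist (weight m k)) W v < ((2 * (2 * m * k + 1) * (k + 1) : ℕ) : ℝ≥0∞) :=
  calc latency (starDist (weight m k)) W v
      = importance m v * latency (starDist (weight m k)) W v := by
        rw [importance, if_pos hv, one_mul]
    _ ≤ k * OPT (starDist (weight m k)) (importance m) := (mul_latency_le_walkCost _ v).trans hcost
    _ ≤ k * (2 * (2 * m + (2 * m * k + 1))) := by gcongr; exact OPT_le hm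
    _ < ((2 * (2 * m * k + 1) * (k + 1) : ℕ) : ℝ≥0∞) := by
      have : k * (2 * (2 * m + (2 * m * k + 1))) < 2 * (2 * m * k + 1) * (k + 1) := by nlinarith
      exact_mod_cast this

lemma exists_return_card_inter_lightVertices_le (hm : 0 < m) {W : ℕ → Fin (4 * m)}
    (hcost : walkCost (starDist (weight m k)) (importance m) W ≤
      k * OPT (starDist (weight m k)) (importance m))
    {v : Fin (4 * m)} (hv : v.val < 2 * m) {a : ℕ} (ha : W a = v) :
    ∃ b, a < b ∧ W b = v ∧ #((Icc a b).image W ∩ lightVertices m) ≤ k := by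
  obtain ⟨b, hab, hb, hlen⟩ :=
    exists_walkLen_lt_of_latency_lt (latency_lt_of_walkCost_le hm hcost hv) ha
  refine ⟨b, hab, hb, ?_⟩
  set S := (Icc a b).image W ∩ lightVertices m
  have hv1 : weight m k v = 1 := if_pos hv
  have hvS : v ∉ S := fun h => (mem_filter.1 (mem_inter.1 h).2).2 hv
  have hsum : 1 + (#S : ℝ≥0∞) * ((2 * m * k + 1 : ℕ) : ℝ≥0∞) ≤
      ∑ u ∈ (Icc a b).image W, weight m k u := by
    have hS : ∀ u ∈ S, weight m k u = ((2 * m * k + 1 : ℕ) : ℝ≥0∞) := fun u hu =>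
      if_neg (mem_filter.1 (mem_inter.1 hu).2).2
    calc 1 + (#S : ℝ≥0∞) * ((2 * m * k + 1 : ℕ) : ℝ≥0∞) = ∑ u ∈ insert v S, weight m k u := by
          rw [sum_insert hvS, hv1, sum_congr rfl hS, sum_const, nsmul_eq_mul]
      _ ≤ ∑ u ∈ (Icc a b).image W, weight m k u := by
          refine sum_le_sum_of_subset (insert_subset ?_ inter_subset_left)
          exact ha ▸ mem_image_of_mem W (mem_Icc.2 ⟨le_rfl, hab.le⟩)
  have hwalk :=
    two_mul_sum_image_le_walkLen (W := W) (w := weight m k) (fun _ _ => le_starDist) hab.le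
  rw [ha, hb, hv1] at hwalk
  have hlt : 2 * (1 + (#S : ℝ≥0∞) * ((2 * m * k + 1 : ℕ) : ℝ≥0∞)) <
      ((2 * (2 * m * k + 1) * (k + 1) : ℕ) : ℝ≥0∞) + 1 + 1 :=
    calc _ ≤ 2 * ∑ u ∈ (Icc a b).image W, weight m k u := by gcongr
      _ ≤ _ := hwalk
      _ < _ := by gcongr <;> exact ENNReal.one_ne_top
  have hnat : 2 * (1 + #S * (2 * m * k + 1)) < 2 * (2 * m * k + 1) * (k + 1) + 1 + 1 := by
    exact_mod_cast hlt
  have hcard : #S * (2 * m * k + 1) < (k + 1) * (2 * m * k + 1) := by linarith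
  exact Nat.lt_succ_iff.1 (Nat.lt_of_mul_lt_mul_right hcard)

lemma mul_self_le_mul_period (hm : 0 < m) {W : ℕ → Fin (4 * m)} {p : ℕ} (hp : 0 < p)
    (hW : Periodic W p) (hvis : VisitsInfOften W)
    (hcost : walkCost (starDist (weight m k)) (importance m) W ≤
      k * OPT (starDist (weight m k)) (importance m)) :
    2 * m * (2 * m) ≤ k * p := by
  have hvisit : ∀ v, ∃ a, W a = v := fun v => (hvis v 0).imp fun _ h => h.2
  have hheavy : ∀ v ∈ heavyVertices m, 2 * m ≤ k * Nat.count (fun i => W i = v) p :=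
    fun v hv => card_lightVertices (m := m) ▸
      card_le_mul_count_of_periodic hW hp (hvisit v) (fun u _ => hvisit u) fun _ ha =>
        exists_return_card_inter_lightVertices_le hm hcost (mem_filter.1 hv).2 ha
  calc 2 * m * (2 * m) = ∑ v ∈ heavyVertices m, 2 * m := by
        rw [sum_const, card_heavyVertices, smul_eq_mul]
    _ ≤ ∑ v ∈ heavyVertices m, k * Nat.count (fun i => W i = v) p := sum_le_sum hheavy
    _ ≤ ∑ v, k * Nat.count (fun i => W i = v) p := sum_le_sum_of_subset (subset_univ _)
    _ = k * p := by rw [← mul_sum, sum_count_fiber_eq]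

end HeavyLight

theorem small_walks_bad_approximation_general (k n : ℕ) (hn : 4 ∣ n) :
    ∃ (l : Fin n → Fin n → ℝ≥0∞) (φ : Fin n → ℝ≥0∞),
      (∀ v, l v v = 0) ∧ (∀ u v, l u v = l v u) ∧
      (∀ u v w, l u w ≤ l u v + l v w) ∧
      (∀ u v, u ≠ v → 0 < l u v ∧ l u v ≠ ⊤) ∧
      (∀ v, 0 < φ v ∧ φ v ≤ 1) ∧
      ∀ (W : ℕ → Fin n) (p : ℕ), 0 < p → (∀ i, W (i + p) = W i) →
        VisitsInfOften W → walkCost l φ W ≤ (k : ℝ≥0∞) * OPT l φ →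
        n ^ 2 ≤ 4 * k * p := by
  obtain ⟨m, rfl⟩ := hn
  refine ⟨starDist (HeavyLight.weight m k), HeavyLight.importance m, starDist_self,
    starDist_comm, starDist_triangle,
    fun u v h => ⟨starDist_pos h (HeavyLight.weight_pos u),
      starDist_ne_top (HeavyLight.weight_ne_top u) (HeavyLight.weight_ne_top v)⟩,
    fun v => ⟨HeavyLight.importance_pos v, HeavyLight.importance_le_one v⟩,
    fun W p hp hW hvis hcost => ?_⟩
  rcases Nat.eq_zero_or_pos m with rfl | hm
  · simp
  calc (4 * m) ^ 2 = 4 * (2 * m * (2 * m)) := by ring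
    _ ≤ 4 * (k * p) :=
        Nat.mul_le_mul_left 4 (HeavyLight.mul_self_le_mul_period hm hp hW hvis hcost)
    _ = 4 * k * p := (mul_assoc _ _ _).symm

/-- Size–approximation trade-off: for every k ≥ 1 and n divisible by 4 there is a metric
graph on n vertices such that any closed walk whose expansion has cost at most k·OPT
has size at least n²/(4k). -/
theorem small_walks_bad_approximation (k n : ℕ) (hk : 1 ≤ k) (hn : 4 ∣ n) :
    ∃ (l : Fin n → Fin n → ℝ≥0∞) (φ : Fin n → ℝ≥0∞),
      (∀ v, l v v = 0) ∧ (∀ u v, l u v = l v u) ∧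
      (∀ u v w, l u w ≤ l u v + l v w) ∧
      (∀ u v, u ≠ v → 0 < l u v ∧ l u v ≠ ⊤) ∧
      (∀ v, 0 < φ v ∧ φ v ≤ 1) ∧
      ∀ (W : ℕ → Fin n) (p : ℕ), 0 < p → (∀ i, W (i + p) = W i) →
        VisitsInfOften W → walkCost l φ W ≤ (k : ℝ≥0∞) * OPT l φ →
        n ^ 2 ≤ 4 * k * p :=
  small_walks_bad_approximation_general k n hn
end

section
/- Let W be a walk of total length L and k a positive integer. Then the vertices of W can be partitioned (preserving order) into k consecutive sub-walks W_1, ..., W_k such that each W_i has length at most L/k. -/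
/-!
Greedy cutting: from the start of the walk, take the longest prefix of length at most
`B = L / k`. Unless the walk is used up, the next edge overshoots `B`, so the remaining walk
has length at most `L - B`; by induction it splits into `k - 1` parts of length at most `B`.
-/

/-- Length of a finite walk given as a list of vertices: the sum of the lengths of
its consecutive edges. -/
def listLen {V : Type*} (l : V → V → NNReal) (W : List V) : NNReal :=
  ((W.zip W.tail).map (fun q => l q.1 q.2)).sum

lemma listLen_cons_cons {V : Type*} (l : V → V → NNReal) (a b : V) (t : List V) :
    listLen l (a :: b :: t) = l a b + listLen l (b :: t) := by
  simp [listLen]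

/- `-` is truncated: if the whole walk fits into `B`, the bound forces `C` to have length `0`. -/
lemma exists_cons_append_listLen_le {V : Type*} (l : V → V → NNReal) (a : V) (W : List V)
    (B : NNReal) :
    ∃ A C, A ++ C = W ∧ listLen l (a :: A) ≤ B ∧ listLen l C ≤ listLen l (a :: W) - B := by
  induction W generalizing a B with
  | nil => exact ⟨[], [], rfl, by simp [listLen], by simp [listLen]⟩
  | cons b t ih =>
    by_cases hab : l a b ≤ B
    · obtain ⟨A, C, hAC, hA, hC⟩ := ih b (B - l a b)
      have hB : l a b + (B - l a b) = B := add_tsub_cancel_of_le hab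
      refine ⟨b :: A, C, by rw [List.cons_append, hAC], ?_, ?_⟩
      · rw [listLen_cons_cons, ← hB]
        exact add_le_add_right hA _
      · rwa [listLen_cons_cons, ← hB, add_tsub_add_eq_tsub_left]
    · refine ⟨[], b :: t, rfl, by simp [listLen], ?_⟩
      rw [listLen_cons_cons, le_tsub_iff_left (le_add_right (not_le.mp hab).le)]
      exact add_le_add_left (not_le.mp hab).le _

lemma exists_append_listLen_le {V : Type*} (l : V → V → NNReal) (W : List V) (B : NNReal) :
    ∃ A C, A ++ C = W ∧ listLen l A ≤ B ∧ listLen l C ≤ listLen l W - B := by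
  cases W with
  | nil => exact ⟨[], [], rfl, by simp [listLen], by simp [listLen]⟩
  | cons a W =>
    obtain ⟨A, C, hAC, hA, hC⟩ := exists_cons_append_listLen_le l a W B
    exact ⟨a :: A, C, by rw [List.cons_append, hAC], hA, hC⟩

lemma exists_flatten_eq_listLen_le {V : Type*} (l : V → V → NNReal) (k : ℕ) (W : List V)
    (B : NNReal) (hW : listLen l W ≤ (k + 1) * B) :
    ∃ P : List (List V), P.length = k + 1 ∧ P.flatten = W ∧ ∀ part ∈ P, listLen l part ≤ B := by
  induction k generalizing W with
  | zero => exact ⟨[W], rfl, by simp, by simpa using hW⟩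
  | succ k ih =>
    obtain ⟨A, C, hAC, hA, hC⟩ := exists_append_listLen_le l W B
    have hC' : listLen l C ≤ (k + 1) * B := by
      refine hC.trans (tsub_le_iff_right.mpr ?_)
      calc listLen l W ≤ (↑(k + 1) + 1) * B := hW
        _ = (k + 1) * B + B := by push_cast; ring
    obtain ⟨P, hlen, hflat, hP⟩ := ih C hC'
    exact ⟨A :: P, by simp [hlen], by rw [List.flatten_cons, hflat, hAC],
      List.forall_mem_cons.mpr ⟨hA, hP⟩⟩

/-- Partition lemma: the vertices of any walk of total length L can be split, in order,
into k consecutive sub-walks each of length at most L/k. -/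
theorem walk_partition {V : Type*} (l : V → V → NNReal) (W : List V) (k : ℕ)
    (hk : 0 < k) :
    ∃ P : List (List V), P.length = k ∧ P.flatten = W ∧
      ∀ part ∈ P, listLen l part ≤ listLen l W / k := by
  obtain ⟨k, rfl⟩ := Nat.exists_eq_succ_of_ne_zero hk.ne'
  apply exists_flatten_eq_listLen_le l k W
  have hk' : ((k.succ : ℕ) : NNReal) ≠ 0 := by exact_mod_cast hk.ne'
  rw [← Nat.cast_succ, mul_div_cancel₀ _ hk']
end
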